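/- arXiv:1905.09930 — 13 statements merged into one kernel-verified Lean document; each statement's English description precedes it below -/
import Mathlib

section
/- Every chain complete poset is directed complete; that is, if every nonempty chain in a poset has a least upper bound, then every nonempty directed subset has a least upper bound. -/
/-!
Induction on the cardinality of the directed set `D`. If `D` is countable, it has a cofinal
increasing sequence, and the supremum of that chain is the supremum of `D`. Otherwise, enumerate
`D` along the initial ordinal of `#D` and close each initial segment under a choice of upper
bounds of pairs: this writes `D` as the union of an increasing chain of directed subsets of
smaller cardinality (Iwamura's lemma). By induction these have suprema, which again form a chain,
and the supremum of that chain is the supremum of `D`.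
-/

open Set Cardinal

section BinClosure

variable {α : Type*} (g : α → α → α) (B : Set α)

def binClosureStage : ℕ → Set α
  | 0 => B
  | n + 1 => binClosureStage n ∪ image2 g (binClosureStage n) (binClosureStage n)

def binClosure : Set α := ⋃ n, binClosureStage g B n

variable {g B}

theorem monotone_binClosureStage : Monotone (binClosureStage g B) :=
  monotone_nat_of_le_succ fun _ => subset_union_left

theorem subset_binClosure : B ⊆ binClosure g B :=
  subset_iUnion (binClosureStage g B) 0

theorem apply_mem_binClosure {x y : α} (hx : x ∈ binClosure g B) (hy : y ∈ binClosure g B) :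
    g x y ∈ binClosure g B := by
  obtain ⟨m, hxm⟩ := mem_iUnion.1 hx
  obtain ⟨n, hyn⟩ := mem_iUnion.1 hy
  refine mem_iUnion.2 ⟨max m n + 1, Or.inr (mem_image2_of_mem ?_ ?_)⟩
  · exact monotone_binClosureStage (le_max_left m n) hxm
  · exact monotone_binClosureStage (le_max_right m n) hyn

theorem binClosure_subset {D : Set α} (hBD : B ⊆ D) (hD : ∀ x ∈ D, ∀ y ∈ D, g x y ∈ D) :
    binClosure g B ⊆ D := by
  refine iUnion_subset fun n => ?_
  induction n with
  | zero => exact hBD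
  | succ n ih =>
    exact union_subset ih (image2_subset_iff.2 fun x hx y hy => hD x (ih hx) y (ih hy))

theorem binClosure_mono {B' : Set α} (h : B ⊆ B') : binClosure g B ⊆ binClosure g B' :=
  binClosure_subset (h.trans subset_binClosure) fun _ hx _ hy => apply_mem_binClosure hx hy

theorem mk_binClosureStage_le (n : ℕ) : #(binClosureStage g B n) ≤ max ℵ₀ #B := by
  induction n with
  | zero => exact le_max_right _ _
  | succ n ih =>
    have hκ : ℵ₀ ≤ max ℵ₀ #B := le_max_left _ _
    calc #(binClosureStage g B (n + 1))
        ≤ #(binClosureStage g B n) + #(binClosureStage g B n) * #(binClosureStage g B n) :=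
          (mk_union_le _ _).trans (add_le_add_right mk_image2_le _)
      _ ≤ max ℵ₀ #B := add_le_of_le hκ ih (mul_le_of_le hκ ih ih)

theorem mk_binClosure_le : #(binClosure g B) ≤ max ℵ₀ #B := by
  rw [← lift_le.{0}]
  refine (mk_iUnion_le_lift _).trans ?_
  simp only [mk_nat, lift_aleph0, lift_id']
  have hκ : ℵ₀ ≤ max ℵ₀ #B := le_max_left _ _
  exact mul_le_of_le hκ hκ (ciSup_le' mk_binClosureStage_le)

end BinClosure

section Directed

variable {T : Type*} [Preorder T] {D : Set T}

theorem IsLUB.of_isCofinalFor_of_subset {C : Set T} {t : T} (ht : IsLUB C t) (hCD : C ⊆ D)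
    (hDC : IsCofinalFor D C) : IsLUB D t :=
  (isLUB_congr ((upperBounds_mono_set hCD).antisymm (upperBounds_mono_of_isCofinalFor hDC))).2 ht

theorem DirectedOn.exists_monotone_isCofinalFor_range (hD : DirectedOn (· ≤ ·) D)
    (hne : D.Nonempty) (hc : D.Countable) :
    ∃ x : ℕ → T, Monotone x ∧ range x ⊆ D ∧ IsCofinalFor D (range x) := by
  have : Countable D := hc.to_subtype
  have : Encodable D := Encodable.ofCountable D
  let above : D → Order.Cofinal D := fun d =>
    ⟨Ici d, fun y => by
      obtain ⟨z, hz, hdz, hyz⟩ := hD d d.2 y y.2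
      exact ⟨⟨z, hz⟩, hdz, hyz⟩⟩
  let x := Order.sequenceOfCofinals ⟨_, hne.some_mem⟩ above
  refine ⟨Subtype.val ∘ x, (Subtype.mono_coe _).comp (Order.sequenceOfCofinals.monotone _ _),
    range_subset_iff.2 fun n => (x n).2, fun d hd => ?_⟩
  exact ⟨_, mem_range_self (Encodable.encode (⟨d, hd⟩ : D) + 1),
    Order.sequenceOfCofinals.encode_mem _ above ⟨d, hd⟩⟩

theorem DirectedOn.exists_monotone_iUnion_eq (hD : DirectedOn (· ≤ ·) D) (hc : ℵ₀ < #D) :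
    ∃ E : (#D).ord.ToType → Set T, Monotone E ∧ ⋃ i, E i = D ∧ (∀ i, (E i).Nonempty) ∧
      (∀ i, DirectedOn (· ≤ ·) (E i)) ∧ ∀ i, #(E i) < #D := by
  have : Nonempty T := (mk_ne_zero_iff.1 (aleph0_pos.trans hc).ne').map Subtype.val
  choose! g hgD hg using hD
  obtain ⟨φ⟩ : Nonempty ((#D).ord.ToType ≃ D) := Cardinal.eq.1 (mk_ord_toType _)
  let B : (#D).ord.ToType → Set T := fun i => (fun j => (φ j : T)) '' Iic i
  have hBD : ∀ i, B i ⊆ D := by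
    rintro i _ ⟨j, -, rfl⟩
    exact (φ j).2
  have hE : ∀ i, binClosure g (B i) ⊆ D := fun i => binClosure_subset (hBD i) hgD
  have hB : ∀ i, #(B i) < #D := fun i =>
    mk_image_le.trans_lt (by simpa using mk_Iic_lt i (by simp) (by simpa using hc.le))
  refine ⟨fun i => binClosure g (B i),
    fun i j hij => binClosure_mono (image_mono (Iic_subset_Iic.2 hij)),
    (iUnion_subset hE).antisymm fun d hd => ?_, fun i => ?_, fun i => ?_, fun i => ?_⟩
  · refine mem_iUnion.2 ⟨φ.symm ⟨d, hd⟩, subset_binClosure ⟨φ.symm ⟨d, hd⟩, self_mem_Iic, ?_⟩⟩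
    simp
  · exact ⟨φ i, subset_binClosure ⟨i, self_mem_Iic, rfl⟩⟩
  · exact fun x hx y hy => ⟨g x y, apply_mem_binClosure hx hy, hg x (hE i hx) y (hE i hy)⟩
  · exact mk_binClosure_le.trans_lt (max_lt hc (hB i))

end Directed

/-- Every chain complete poset is directed complete. -/
theorem chainComplete_implies_directedComplete {T : Type*} [PartialOrder T]
    (hcc : ∀ C : Set T, C.Nonempty → IsChain (· ≤ ·) C → ∃ s, IsLUB C s) :
    ∀ D : Set T, D.Nonempty → DirectedOn (· ≤ ·) D → ∃ s, IsLUB D s := by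
  intro D hne hdir
  induction hD : #D using WellFoundedLT.induction generalizing D with
  | _ c ih =>
  subst hD
  rcases le_or_gt #D ℵ₀ with hcount | hunc
  · obtain ⟨x, hx, hxD, hDx⟩ :=
      hdir.exists_monotone_isCofinalFor_range hne (le_aleph0_iff_set_countable.1 hcount)
    obtain ⟨t, ht⟩ := hcc _ (range_nonempty x) hx.isChain_range
    exact ⟨t, ht.of_isCofinalFor_of_subset hxD hDx⟩
  · obtain ⟨E, hE_mono, hE_union, hE_ne, hE_dir, hE_card⟩ := hdir.exists_monotone_iUnion_eq hunc
    choose s hs using fun i => ih _ (hE_card i) (E i) (hE_ne i) (hE_dir i) rfl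
    have := nonempty_ord_toType (aleph0_pos.trans hunc).ne'
    obtain ⟨t, ht⟩ := hcc _ (range_nonempty s)
      (Monotone.isChain_range fun i j hij => (hs i).mono (hs j) (hE_mono hij))
    exact ⟨t, hE_union ▸ (isLUB_iUnion_iff_of_isLUB hs t).1 ht⟩
end

section
/- If (X,𝓑) is an S₄ ball space (the intersection of every nest of balls contains a largest ball), then it is an S₄ᵈ ball space (the intersection of every directed system of balls contains a largest ball). -/
/-!
Induction on the cardinality of the directed system `D`. A countable `D` contains a descending
sequence that is coinitial in it, i.e. a nest with the same intersection. An uncountable `D`,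
enumerated along the initial ordinal of `#D`, is the increasing union of the closures of its
initial segments under a fixed choice of common lower bounds; these are directed systems of
smaller cardinality. By induction each has a largest ball in its intersection, these balls
decrease along the union and so form a nest, and the largest ball in the intersection of that
nest is the largest ball in `⋂₀ D`.
-/

open Set Cardinal

namespace Set

variable {α : Type*} (w : α → α → α)

def closureUnderIter (S : Set α) : ℕ → Set α
  | 0 => S
  | n + 1 => closureUnderIter S n ∪ image2 w (closureUnderIter S n) (closureUnderIter S n)

def closureUnder (S : Set α) : Set α :=
  ⋃ n, closureUnderIter w S n

theorem monotone_closureUnderIter (S : Set α) : Monotone (closureUnderIter w S) :=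
  monotone_nat_of_le_succ fun _ ↦ subset_union_left

theorem subset_closureUnder (S : Set α) : S ⊆ closureUnder w S :=
  subset_iUnion (closureUnderIter w S) 0

theorem map_mem_closureUnder {S : Set α} {a b : α} (ha : a ∈ closureUnder w S)
    (hb : b ∈ closureUnder w S) : w a b ∈ closureUnder w S := by
  obtain ⟨m, ha⟩ := mem_iUnion.1 ha
  obtain ⟨n, hb⟩ := mem_iUnion.1 hb
  have hmono := monotone_closureUnderIter w S
  exact mem_iUnion.2 ⟨max m n + 1,
    Or.inr (mem_image2_of_mem (hmono (le_max_left m n) ha) (hmono (le_max_right m n) hb))⟩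

theorem closureUnder_subset {S T : Set α} (hST : S ⊆ T) (hT : ∀ a ∈ T, ∀ b ∈ T, w a b ∈ T) :
    closureUnder w S ⊆ T := by
  refine iUnion_subset fun n ↦ ?_
  induction n with
  | zero => exact hST
  | succ n ih => exact union_subset ih (image2_subset_iff.2 fun a ha b hb ↦ hT a (ih ha) b (ih hb))

theorem closureUnder_mono {S T : Set α} (h : S ⊆ T) : closureUnder w S ⊆ closureUnder w T :=
  closureUnder_subset w (h.trans (subset_closureUnder w T)) fun _ ha _ hb ↦
    map_mem_closureUnder w ha hb

theorem mk_closureUnder_le (S : Set α) : #(closureUnder w S) ≤ max #S ℵ₀ := by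
  set c := max #S ℵ₀
  have hc : ℵ₀ ≤ c := le_max_right _ _
  have hiter : ∀ n, #(closureUnderIter w S n) ≤ c := by
    intro n
    induction n with
    | zero => exact le_max_left _ _
    | succ n ih =>
      calc _ ≤ c + c * c :=
            (mk_union_le _ _).trans (add_le_add ih (mk_image2_le.trans (mul_le_mul' ih ih)))
        _ = c := by rw [mul_eq_self hc, add_eq_self hc]
  have hunion := mk_iUnion_le_lift (closureUnderIter w S)
  simp only [lift_uzero, mk_nat, lift_aleph0] at hunion
  calc #(closureUnder w S) ≤ ℵ₀ * ⨆ n, #(closureUnderIter w S n) := hunion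
    _ ≤ c * c := by gcongr; exact ciSup_le' hiter
    _ = c := mul_eq_self hc

end Set

namespace DirectedOn

variable {α : Type*}

theorem exists_isChain_forall_le [Preorder α] {D : Set α} (hD : DirectedOn (· ≥ ·) D)
    (hcount : D.Countable) (hne : D.Nonempty) :
    ∃ N ⊆ D, N.Nonempty ∧ IsChain (· ≤ ·) N ∧ ∀ d ∈ D, ∃ n ∈ N, n ≤ d := by
  have : Encodable D := hcount.toEncodable
  have : Inhabited D := ⟨⟨hne.some, hne.some_mem⟩⟩
  have hdir : Directed (· ≥ ·) ((↑) : D → α) := directedOn_iff_directed.1 hD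
  refine ⟨range (Subtype.val ∘ hdir.sequence _), ?_, range_nonempty _,
    hdir.sequence_anti.isChain_range, fun d hd ↦ ⟨_, mem_range_self _, hdir.sequence_le ⟨d, hd⟩⟩⟩
  exact range_subset_iff.2 fun n ↦ Subtype.prop _

theorem exists_monotone_iUnion_eq_s1 {r : α → α → Prop} {D : Set α} (hD : DirectedOn r D)
    (hcard : ℵ₀ < #D) :
    ∃ P : (#D).ord.ToType → Set α, Monotone P ∧ ⋃ i, P i = D ∧
      ∀ i, DirectedOn r (P i) ∧ (P i).Nonempty ∧ #(P i) < #D := by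
  choose! w hw using hD
  obtain ⟨e⟩ : Nonempty ((#D).ord.ToType ≃ D) := Cardinal.eq.1 (mk_ord_toType #D)
  set P : (#D).ord.ToType → Set α := fun i ↦ closureUnder w ((fun j ↦ (e j : α)) '' Iic i)
  have hPD : ∀ i, P i ⊆ D := fun i ↦
    closureUnder_subset w (by rintro _ ⟨j, -, rfl⟩; exact (e j).2) fun a ha b hb ↦ (hw a ha b hb).1
  have hmem : ∀ i, ↑(e i) ∈ P i := fun i ↦ subset_closureUnder w _ ⟨i, self_mem_Iic, rfl⟩
  have hPdir : ∀ i, DirectedOn r (P i) := fun i a ha b hb ↦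
    ⟨w a b, map_mem_closureUnder w ha hb, (hw a (hPD i ha) b (hPD i hb)).2⟩
  refine ⟨P, fun i j hij ↦ closureUnder_mono w (image_mono (Iic_subset_Iic.2 hij)), ?_,
    fun i ↦ ⟨hPdir i, ⟨_, hmem i⟩, ?_⟩⟩
  · refine (iUnion_subset hPD).antisymm fun d hd ↦ mem_iUnion.2 ⟨e.symm ⟨d, hd⟩, ?_⟩
    simpa using hmem (e.symm ⟨d, hd⟩)
  · refine (mk_closureUnder_le w _).trans_lt (max_lt ?_ hcard)
    calc #((fun j ↦ (e j : α)) '' Iic i) ≤ #(Iic i) := mk_image_le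
      _ < #(#D).ord.ToType := mk_Iic_lt i (by simp) (by simpa using hcard.le)
      _ = #D := mk_ord_toType _

end DirectedOn

section CompleteLattice

variable {α : Type*} [CompleteLattice α] {B : Set α}

theorem isGreatest_inter_Iic_iInf {ι : Sort*} {s b : ι → α} {c : α}
    (hb : ∀ i, IsGreatest (B ∩ Iic (s i)) (b i)) (hc : IsGreatest (B ∩ Iic (⨅ i, b i)) c) :
    IsGreatest (B ∩ Iic (⨅ i, s i)) c :=
  ⟨⟨hc.1.1, hc.1.2.trans (iInf_mono fun i ↦ (hb i).1.2)⟩, fun _ ⟨hxB, hx⟩ ↦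
    hc.2 ⟨hxB, le_iInf fun i ↦ (hb i).2 ⟨hxB, hx.trans (iInf_le s i)⟩⟩⟩

theorem exists_isGreatest_inter_Iic_sInf_of_directedOn
    (hB : ∀ N ⊆ B, N.Nonempty → IsChain (· ≤ ·) N → ∃ b, IsGreatest (B ∩ Iic (sInf N)) b)
    {D : Set α} (hDB : D ⊆ B) (hne : D.Nonempty) (hD : DirectedOn (· ≥ ·) D) :
    ∃ b, IsGreatest (B ∩ Iic (sInf D)) b := by
  generalize hκ : #D = κ
  induction κ using WellFoundedLT.induction generalizing D with
  | _ κ IH =>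
  rcases le_or_gt #D ℵ₀ with hcount | hcard
  · obtain ⟨N, hND, hNne, hN, hND_le⟩ :=
      hD.exists_isChain_forall_le (le_aleph0_iff_set_countable.1 hcount) hne
    have hsInf : sInf N = sInf D := le_antisymm
      (le_sInf fun d hd ↦ let ⟨n, hn, hnd⟩ := hND_le d hd; (sInf_le hn).trans hnd)
      (sInf_le_sInf hND)
    exact hsInf ▸ hB N (hND.trans hDB) hNne hN
  · obtain ⟨P, hPmono, hPD, hP⟩ := hD.exists_monotone_iUnion_eq_s1 hcard
    have hPB : ∀ i, P i ⊆ B := fun i ↦ (subset_iUnion P i).trans (hPD.symm ▸ hDB)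
    choose b hb using fun i ↦ IH _ (hκ ▸ (hP i).2.2) (hPB i) (hP i).2.1 (hP i).1 rfl
    have hanti : Antitone b := fun i j hij ↦
      (hb j).mono (hb i) (inter_subset_inter_right _ (Iic_subset_Iic.2 (sInf_le_sInf (hPmono hij))))
    have : Nonempty (#D).ord.ToType := nonempty_ord_toType (aleph0_pos.trans hcard).ne'
    obtain ⟨c, hc⟩ := hB (range b) (range_subset_iff.2 fun i ↦ (hb i).1.1) (range_nonempty b)
      hanti.isChain_range
    rw [sInf_range] at hc
    rw [← hPD, show sInf (⋃ i, P i) = ⨅ i, sInf (P i) from sSup_iUnion (β := αᵒᵈ) P]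
    exact ⟨c, isGreatest_inter_Iic_iInf hb hc⟩

end CompleteLattice

theorem exists_isGreatest_inter_Iic_iff {α : Type*} [Preorder α] {B : Set α} {s : α} :
    (∃ b, IsGreatest (B ∩ Iic s) b) ↔ ∃ b ∈ B, b ≤ s ∧ ∀ b' ∈ B, b' ≤ s → b' ≤ b := by
  simp [IsGreatest, upperBounds, and_assoc]

theorem S4_implies_S4d_general {X : Type*} (B : Set (Set X))
    (hS4 : ∀ N ⊆ B, N.Nonempty → IsChain (· ⊆ ·) N →
      ∃ b ∈ B, b ⊆ ⋂₀ N ∧ ∀ b' ∈ B, b' ⊆ ⋂₀ N → b' ⊆ b) :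
    ∀ D ⊆ B, D.Nonempty →
      (∀ b₁ ∈ D, ∀ b₂ ∈ D, ∃ b ∈ D, b ⊆ b₁ ∩ b₂) →
      ∃ b ∈ B, b ⊆ ⋂₀ D ∧ ∀ b' ∈ B, b' ⊆ ⋂₀ D → b' ⊆ b := by
  intro D hDB hne hdir
  have hD : DirectedOn (· ≥ ·) D := fun b₁ h₁ b₂ h₂ ↦
    (hdir b₁ h₁ b₂ h₂).imp fun _ ⟨hb, hsub⟩ ↦ ⟨hb, subset_inter_iff.1 hsub⟩
  exact exists_isGreatest_inter_Iic_iff.1 <| exists_isGreatest_inter_Iic_sInf_of_directedOn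
    (fun N hNB hNne hN ↦ exists_isGreatest_inter_Iic_iff.2 (hS4 N hNB hNne hN)) hDB hne hD

/-- S₄ implies S₄ᵈ: if the intersection of every nest of balls contains a largest ball,
then the intersection of every directed system of balls contains a largest ball. -/
theorem S4_implies_S4d {X : Type*} [Nonempty X] (B : Set (Set X))
    (hBne : B.Nonempty) (hballs : ∀ b ∈ B, b.Nonempty)
    (hS4 : ∀ N ⊆ B, N.Nonempty → IsChain (· ⊆ ·) N →
      ∃ b ∈ B, b ⊆ ⋂₀ N ∧ ∀ b' ∈ B, b' ⊆ ⋂₀ N → b' ⊆ b) :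
    ∀ D ⊆ B, D.Nonempty →
      (∀ b₁ ∈ D, ∀ b₂ ∈ D, ∃ b ∈ D, b ⊆ b₁ ∩ b₂) →
      ∃ b ∈ B, b ⊆ ⋂₀ D ∧ ∀ b' ∈ B, b' ⊆ ⋂₀ D → b' ⊆ b :=
  S4_implies_S4d_general B hS4
end

section
/- For an intersection closed ball space, S₁ (spherical completeness) implies S₅ᶜ (the intersection of every centered system of balls is a ball). Hence all properties in the hierarchy are equivalent for intersection closed ball spaces. -/
/-!
Let `C` be a centered system and `D` the set of its finite intersections, a downward directed
family of balls with the same intersection as `C`. Among the balls meeting every member of `D`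
choose, by Zorn's lemma, a minimal one `x`: the intersection of a nest of such balls is again
such a ball, because for `d ∈ D` the traces `n ∩ d` form a nest of balls, which has nonempty
intersection by S₁. Directedness makes `x ∩ d` again a ball meeting all of `D`, so minimality
forces `x ⊆ d`. Hence the ball `x` lies in `⋂₀ C`, which is therefore a ball.
-/

open Set

namespace BallSpace

variable {X : Type*}

def IntersectionClosed (B : Set (Set X)) : Prop :=
  ∀ C ⊆ B, C.Nonempty → (⋂₀ C).Nonempty → ⋂₀ C ∈ B

def SphericallyComplete (B : Set (Set X)) : Prop :=
  ∀ N ⊆ B, N.Nonempty → IsChain (· ⊆ ·) N → (⋂₀ N).Nonempty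

def IsCentered (C : Set (Set X)) : Prop :=
  ∀ F : Finset (Set X), ↑F ⊆ C → F.Nonempty → (⋂₀ (F : Set (Set X))).Nonempty

def finiteInters (C : Set (Set X)) : Set (Set X) :=
  (fun F : Finset (Set X) => ⋂₀ (F : Set (Set X))) '' {F | ↑F ⊆ C ∧ F.Nonempty}

theorem subset_finiteInters (C : Set (Set X)) : C ⊆ finiteInters C :=
  fun c hc => ⟨{c}, ⟨by simpa using hc, Finset.singleton_nonempty c⟩, by simp⟩

theorem directedOn_finiteInters (C : Set (Set X)) : DirectedOn (· ⊇ ·) (finiteInters C) := by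
  refine directedOn_image.2 fun F ⟨hFC, hF⟩ G ⟨hGC, _⟩ =>
    ⟨F ∪ G, ⟨?_, hF.mono Finset.subset_union_left⟩, ?_, ?_⟩
  · simpa using union_subset hFC hGC
  all_goals simp only [Order.Preimage, Finset.coe_union]
  · exact sInter_subset_sInter subset_union_left
  · exact sInter_subset_sInter subset_union_right

variable {B : Set (Set X)}

theorem IntersectionClosed.inter_mem (hic : IntersectionClosed B) {a b : Set X} (ha : a ∈ B)
    (hb : b ∈ B) (hab : (a ∩ b).Nonempty) : a ∩ b ∈ B := by
  simpa using hic {a, b} (insert_subset ha (singleton_subset_iff.2 hb)) (insert_nonempty a {b})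
    (by simpa using hab)

theorem IntersectionClosed.finiteInters_subset (hic : IntersectionClosed B) {C : Set (Set X)}
    (hCB : C ⊆ B) (hC : IsCentered C) : finiteInters C ⊆ B := by
  rintro _ ⟨F, ⟨hFC, hF⟩, rfl⟩
  exact hic _ (hFC.trans hCB) (by simpa using hF) (hC F hFC hF)

theorem SphericallyComplete.sInter_mem (hS1 : SphericallyComplete B)
    (hic : IntersectionClosed B)
    {N : Set (Set X)} (hNB : N ⊆ B) (hN : N.Nonempty) (hchain : IsChain (· ⊆ ·) N) :
    ⋂₀ N ∈ B :=
  hic N hNB hN (hS1 N hNB hN hchain)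

theorem SphericallyComplete.sInter_inter_nonempty (hS1 : SphericallyComplete B)
    (hic : IntersectionClosed B) {N : Set (Set X)} (hNB : N ⊆ B) (hN : N.Nonempty)
    (hchain : IsChain (· ⊆ ·) N) {c : Set X} (hc : c ∈ B)
    (hmeet : ∀ n ∈ N, (n ∩ c).Nonempty) :
    (⋂₀ N ∩ c).Nonempty := by
  have hchain' : IsChain (· ⊆ ·) ((· ∩ c) '' N) :=
    hchain.image_of_map_rel _ _ _ fun _ _ h => inter_subset_inter_left c h
  have himB : (· ∩ c) '' N ⊆ B := by
    rintro _ ⟨n, hn, rfl⟩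
    exact hic.inter_mem (hNB hn) hc (hmeet n hn)
  simpa [sInter_image, biInter_inter hN, sInter_eq_biInter] using
    hS1 _ himB (hN.image _) hchain'

theorem SphericallyComplete.sInter_nonempty_of_directedOn (hS1 : SphericallyComplete B)
    (hic : IntersectionClosed B) (hballs : ∀ b ∈ B, b.Nonempty) {D : Set (Set X)}
    (hDB : D ⊆ B) (hD : D.Nonempty) (hdir : DirectedOn (· ⊇ ·) D) : (⋂₀ D).Nonempty := by
  set T := {x ∈ B | ∀ d ∈ D, (x ∩ d).Nonempty}
  have hmeet : ∀ {x}, (∀ e ∈ D, (x ∩ e).Nonempty) →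
      ∀ d ∈ D, ∀ d' ∈ D, (x ∩ d ∩ d').Nonempty := by
    intro x hx d hd d' hd'
    obtain ⟨e, he, hed, hed'⟩ := hdir d hd d' hd'
    rw [inter_assoc]
    exact (hx e he).mono (inter_subset_inter_right x (subset_inter hed hed'))
  have hinter_mem : ∀ x ∈ T, ∀ d ∈ D, x ∩ d ∈ T := fun x ⟨hxB, hx⟩ d hd =>
    ⟨hic.inter_mem hxB (hDB hd) (hx d hd), hmeet hx d hd⟩
  have hchains :
    ∀ N ⊆ T, IsChain (· ⊆ ·) N → N.Nonempty → ∃ lb ∈ T, ∀ n ∈ N, lb ⊆ n := by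
    intro N hNT hchain hN
    have hNB : N ⊆ B := fun n hn => (hNT hn).1
    refine ⟨⋂₀ N, ⟨hS1.sInter_mem hic hNB hN hchain, fun d hd => ?_⟩,
      fun n => sInter_subset_of_mem⟩
    exact hS1.sInter_inter_nonempty hic hNB hN hchain (hDB hd) fun n hn => (hNT hn).2 d hd
  obtain ⟨d₀, hd₀⟩ := hD
  have hd₀T : d₀ ∈ T := ⟨hDB hd₀, fun d hd => by
    obtain ⟨e, he, hed₀, hed⟩ := hdir d₀ hd₀ d hd
    exact (hballs e (hDB he)).mono (subset_inter hed₀ hed)⟩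
  obtain ⟨x, -, hxmin⟩ := zorn_superset_nonempty T hchains d₀ hd₀T
  have hxD : x ⊆ ⋂₀ D := subset_sInter fun d hd =>
    (hxmin.eq_of_subset (hinter_mem x hxmin.prop d hd) inter_subset_left).ge.trans
      inter_subset_right
  exact (hballs x hxmin.prop.1).mono hxD

theorem SphericallyComplete.sInter_mem_of_isCentered (hS1 : SphericallyComplete B)
    (hic : IntersectionClosed B) (hballs : ∀ b ∈ B, b.Nonempty) {C : Set (Set X)}
    (hCB : C ⊆ B) (hCne : C.Nonempty) (hC : IsCentered C) : ⋂₀ C ∈ B := by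
  have hD : (⋂₀ finiteInters C).Nonempty :=
    hS1.sInter_nonempty_of_directedOn hic hballs (hic.finiteInters_subset hCB hC)
      (hCne.mono (subset_finiteInters C)) (directedOn_finiteInters C)
  exact hic C hCB hCne (hD.mono (sInter_subset_sInter (subset_finiteInters C)))

end BallSpace

theorem intersectionClosed_S1_implies_Sstar_general {X : Type*} (B : Set (Set X))
    (hballs : ∀ b ∈ B, b.Nonempty)
    (hic : ∀ C ⊆ B, C.Nonempty → (⋂₀ C).Nonempty → ⋂₀ C ∈ B)
    (hS1 : ∀ N ⊆ B, N.Nonempty → IsChain (· ⊆ ·) N → (⋂₀ N).Nonempty) :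
    ∀ C ⊆ B, C.Nonempty →
      (∀ F : Finset (Set X), ↑F ⊆ C → F.Nonempty → (⋂₀ (F : Set (Set X))).Nonempty) →
      ⋂₀ C ∈ B :=
  fun _ hCB hCne hC =>
    BallSpace.SphericallyComplete.sInter_mem_of_isCentered hS1 hic hballs hCB hCne hC

/-- For an intersection closed ball space, S₁ implies S₅ᶜ (= S*). -/
theorem intersectionClosed_S1_implies_Sstar {X : Type*} [Nonempty X] (B : Set (Set X))
    (hBne : B.Nonempty) (hballs : ∀ b ∈ B, b.Nonempty)
    (hic : ∀ C ⊆ B, C.Nonempty → (⋂₀ C).Nonempty → ⋂₀ C ∈ B)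
    (hS1 : ∀ N ⊆ B, N.Nonempty → IsChain (· ⊆ ·) N → (⋂₀ N).Nonempty) :
    ∀ C ⊆ B, C.Nonempty →
      (∀ F : Finset (Set X), ↑F ⊆ C → F.Nonempty → (⋂₀ (F : Set (Set X))).Nonempty) →
      ⋂₀ C ∈ B :=
  intersectionClosed_S1_implies_Sstar_general B hballs hic hS1
end

section
/- In a contractive B_x–ball space, the intersection of a maximal nest of balls, if nonempty, equals B_a = {a} for some a in the intersection. -/
/-!
If `a` lies in the intersection of a nest `M`, then by (C1) the ball `B_a` lies below every ball
of `M`, so maximality puts `B_a` into `M` and `⋂₀ M = B_a`. Any ball `B_y ⊊ B_a` with `y ∈ B_a`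
would again lie below all of `M`, hence belong to `M` and contain `⋂₀ M = B_a`; so (C2) forces
`B_a` to be a singleton, necessarily `{a}`.
-/

section MaximalNest

variable {α : Type*} {𝓑 M : Set (Set α)}

theorem mem_of_subset_sInter_of_maximal (hM𝓑 : M ⊆ 𝓑) (hchain : IsChain (· ⊆ ·) M)
    (hmax : ∀ N, N ⊆ 𝓑 → N.Nonempty → IsChain (· ⊆ ·) N → M ⊆ N → N = M)
    {B : Set α} (hB : B ∈ 𝓑) (hBM : B ⊆ ⋂₀ M) : B ∈ M := by
  have hinsert : insert B M = M :=
    hmax _ (Set.insert_subset hB hM𝓑) (Set.insert_nonempty B M)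
      (hchain.insert fun C hC _ => Or.inl (hBM.trans (Set.sInter_subset_of_mem hC)))
      (Set.subset_insert B M)
  exact hinsert ▸ Set.mem_insert B M

end MaximalNest

section BallSpace

variable {X : Type*} {bx : X → Set X}

theorem ball_subset_sInter_of_mem (hC1 : ∀ x y, y ∈ bx x → bx y ⊆ bx x)
    {M : Set (Set X)} (hM : M ⊆ Set.range bx) {a : X} (ha : a ∈ ⋂₀ M) : bx a ⊆ ⋂₀ M := by
  refine Set.subset_sInter fun B hB => ?_
  obtain ⟨x, rfl⟩ := hM hB
  exact hC1 x a (ha _ hB)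

theorem ball_eq_singleton_of_minimal (hC2 : ∀ x, (¬ ∃ a, bx x = {a}) → ∃ y ∈ bx x, bx y ⊂ bx x)
    {a : X} (ha : a ∈ bx a) (hmin : ∀ y ∈ bx a, ¬ bx y ⊂ bx a) : bx a = {a} := by
  by_contra hne
  have hnot_singleton : ¬ ∃ c, bx a = {c} := by
    rintro ⟨c, hc⟩
    obtain rfl : a = c := by rwa [hc] at ha
    exact hne hc
  obtain ⟨y, hy, hlt⟩ := hC2 a hnot_singleton
  exact hmin y hy hlt

end BallSpace

theorem maximal_nest_intersection_singleton_general {X : Type*}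
    (bx : X → Set X)
    (hC1 : ∀ x y, y ∈ bx x → bx y ⊆ bx x)
    (hC2 : ∀ x, (¬ ∃ a, bx x = {a}) → ∃ y ∈ bx x, bx y ⊂ bx x)
    (M : Set (Set X)) (hMsub : M ⊆ Set.range bx)
    (hMchain : IsChain (· ⊆ ·) M)
    (hMmax : ∀ N, N ⊆ Set.range bx → N.Nonempty → IsChain (· ⊆ ·) N → M ⊆ N → N = M)
    (hint : (⋂₀ M).Nonempty) :
    ∃ a ∈ ⋂₀ M, bx a = {a} ∧ ⋂₀ M = bx a := by
  obtain ⟨a, ha⟩ := hint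
  have hmem : ∀ y, bx y ⊆ ⋂₀ M → bx y ∈ M := fun y hy =>
    mem_of_subset_sInter_of_maximal hMsub hMchain hMmax ⟨y, rfl⟩ hy
  have hball : bx a ⊆ ⋂₀ M := ball_subset_sInter_of_mem hC1 hMsub ha
  have heq : ⋂₀ M = bx a := (Set.sInter_subset_of_mem (hmem a hball)).antisymm hball
  refine ⟨a, ha, ball_eq_singleton_of_minimal hC2 (heq ▸ ha) fun y _ hlt => ?_, heq⟩
  have hyM : bx y ∈ M := hmem y (heq ▸ hlt.subset)
  exact hlt.not_subset (heq ▸ Set.sInter_subset_of_mem hyM)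

/-- In a contractive B_x–ball space, the intersection of a maximal nest of balls,
if nonempty, is a singleton ball of the form B_a = {a}. -/
theorem maximal_nest_intersection_singleton {X : Type*} [Nonempty X]
    (bx : X → Set X) (hne : ∀ x, (bx x).Nonempty)
    (hC1 : ∀ x y, y ∈ bx x → bx y ⊆ bx x)
    (hC2 : ∀ x, (¬ ∃ a, bx x = {a}) → ∃ y ∈ bx x, bx y ⊂ bx x)
    (M : Set (Set X)) (hMsub : M ⊆ Set.range bx) (hMne : M.Nonempty)
    (hMchain : IsChain (· ⊆ ·) M)
    (hMmax : ∀ N, N ⊆ Set.range bx → N.Nonempty → IsChain (· ⊆ ·) N → M ⊆ N → N = M)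
    (hint : (⋂₀ M).Nonempty) :
    ∃ a ∈ ⋂₀ M, bx a = {a} ∧ ⋂₀ M = bx a :=
  maximal_nest_intersection_singleton_general bx hC1 hC2 M hMsub hMchain hMmax hint
end

section
/- If (X,𝓑) is a spherically complete contractive B_x–ball space and f : X → X satisfies fx ∈ B_x for all x ∈ X, then f has a fixed point in every ball B ∈ 𝓑. -/
/-! By Zorn's lemma, whose chain condition is spherical completeness together with (C1), every ball
contains a minimal ball. By (C2) a minimal ball is a singleton `{a}`; then `B_a ⊆ {a}` by (C1), so
`f a ∈ B_a` forces `f a = a`. -/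

namespace BallSpace

variable {X : Type*} {bx : X → Set X}

theorem exists_minimal_ball_subset
    (hC1 : ∀ x y, y ∈ bx x → bx y ⊆ bx x)
    (hsc : ∀ N ⊆ Set.range bx, N.Nonempty → IsChain (· ⊆ ·) N → (⋂₀ N).Nonempty) (x : X) :
    ∃ B ⊆ bx x, Minimal (· ∈ Set.range bx) B := by
  refine zorn_superset_nonempty _ (fun c hc hchain hcne => ?_) _ ⟨x, rfl⟩
  obtain ⟨z, hz⟩ := hsc c hc hcne hchain
  refine ⟨bx z, ⟨z, rfl⟩, fun s hs => ?_⟩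
  obtain ⟨y, rfl⟩ := hc hs
  exact hC1 y z (hz _ hs)

theorem exists_eq_singleton_of_minimal
    (hC2 : ∀ x, (¬ ∃ a, bx x = {a}) → ∃ y ∈ bx x, bx y ⊂ bx x)
    {z : X} (hmin : Minimal (· ∈ Set.range bx) (bx z)) : ∃ a, bx z = {a} := by
  by_contra hsing
  obtain ⟨y, -, hlt⟩ := hC2 z hsing
  exact hlt.not_subset (hmin.2 ⟨y, rfl⟩ hlt.subset)

theorem fixedPoint_of_eq_singleton
    (hC1 : ∀ x y, y ∈ bx x → bx y ⊆ bx x)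
    {f : X → X} (hf : ∀ x, f x ∈ bx x) {z a : X} (ha : bx z = {a}) : f a = a := by
  have haz : a ∈ bx z := ha ▸ rfl
  simpa only [ha, Set.mem_singleton_iff] using hC1 z a haz (hf a)

end BallSpace

open BallSpace in
theorem fixedPoint_contractive_Bx_general {X : Type*}
    (bx : X → Set X)
    (hC1 : ∀ x y, y ∈ bx x → bx y ⊆ bx x)
    (hC2 : ∀ x, (¬ ∃ a, bx x = {a}) → ∃ y ∈ bx x, bx y ⊂ bx x)
    (hsc : ∀ N ⊆ Set.range bx, N.Nonempty → IsChain (· ⊆ ·) N → (⋂₀ N).Nonempty)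
    (f : X → X) (hf : ∀ x, f x ∈ bx x) :
    ∀ x : X, ∃ z ∈ bx x, f z = z := by
  intro x
  obtain ⟨_, hsub, hmin⟩ := exists_minimal_ball_subset hC1 hsc x
  obtain ⟨z, rfl⟩ := hmin.1
  obtain ⟨a, ha⟩ := exists_eq_singleton_of_minimal hC2 hmin
  exact ⟨a, hsub (ha ▸ rfl), fixedPoint_of_eq_singleton hC1 hf ha⟩

/-- If (X,𝓑) is a spherically complete contractive B_x–ball space and f satisfies
fx ∈ B_x for all x, then f has a fixed point in every ball. -/
theorem fixedPoint_contractive_Bx {X : Type*} [Nonempty X]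
    (bx : X → Set X) (hne : ∀ x, (bx x).Nonempty)
    (hC1 : ∀ x y, y ∈ bx x → bx y ⊆ bx x)
    (hC2 : ∀ x, (¬ ∃ a, bx x = {a}) → ∃ y ∈ bx x, bx y ⊂ bx x)
    (hsc : ∀ N ⊆ Set.range bx, N.Nonempty → IsChain (· ⊆ ·) N → (⋂₀ N).Nonempty)
    (f : X → X) (hf : ∀ x, f x ∈ bx x) :
    ∀ x : X, ∃ z ∈ bx x, f z = z :=
  fixedPoint_contractive_Bx_general bx hC1 hC2 hsc f hf
end

section
/- Let (X,𝓑) be a spherically complete ball space and f : X → X a function such that every f-closed subset of X contains an f-contracting ball. Then f has a fixed point in every f-closed subset of X. -/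
/-!
Zorn's lemma gives a ball `m` that is minimal among the nonempty `f`-closed balls inside `S`:
the lower bound of a chain is an `f`-closed ball inside the intersection of the chain, which is
nonempty by spherical completeness and `f`-closed. Minimality forces `f '' m = m`, since
`f '' m` contains an `f`-closed ball; and an `f`-contracting ball inside `m` must be `m` itself,
which is therefore a singleton, i.e. a fixed point.
-/

open Set

namespace BallSpace

variable {X : Type*} {B : Set (Set X)} {f : X → X}

def closedBalls (B : Set (Set X)) (f : X → X) : Set (Set X) :=
  {b | b ∈ B ∧ b.Nonempty ∧ f '' b ⊆ b}

lemma exists_closedBall_subset_of_contracting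
    (hcontr : ∀ S : Set X, S.Nonempty → f '' S ⊆ S →
      ∃ b ∈ B, b ⊆ S ∧ f '' b ⊆ b ∧ ((∃ a, b = {a}) ∨ f '' b ⊂ b))
    (S : Set X) (hS : S.Nonempty) (hSf : f '' S ⊆ S) :
    ∃ b ∈ closedBalls B f, b ⊆ S := by
  obtain ⟨b, hbB, hbS, hbf, hcases⟩ := hcontr S hS hSf
  have hb : b.Nonempty := by
    rcases hcases with ⟨a, rfl⟩ | hssub
    · exact singleton_nonempty a
    · exact nonempty_of_ssubset' hssub
  exact ⟨b, ⟨hbB, hb, hbf⟩, hbS⟩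

lemma image_sInter_subset_sInter_of_forall_image_subset {N : Set (Set X)}
    (hN : ∀ b ∈ N, f '' b ⊆ b) : f '' ⋂₀ N ⊆ ⋂₀ N := by
  rintro _ ⟨x, hx, rfl⟩
  exact mem_sInter.2 fun b hb => hN b hb ⟨x, mem_sInter.1 hx b hb, rfl⟩

lemma exists_minimal_closedBall_subset
    (hcomplete : ∀ N ⊆ B, N.Nonempty → IsChain (· ⊆ ·) N → (⋂₀ N).Nonempty)
    (hball : ∀ S : Set X, S.Nonempty → f '' S ⊆ S → ∃ b ∈ closedBalls B f, b ⊆ S)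
    {S : Set X} (hS : S.Nonempty) (hSf : f '' S ⊆ S) :
    ∃ m ⊆ S, Minimal (· ∈ closedBalls B f) m := by
  obtain ⟨b₀, hb₀, hb₀S⟩ := hball S hS hSf
  have hchain : ∀ N ⊆ closedBalls B f, IsChain (· ⊆ ·) N → N.Nonempty →
      ∃ lb ∈ closedBalls B f, ∀ b ∈ N, lb ⊆ b := by
    intro N hN hNchain hNne
    have hNf : f '' ⋂₀ N ⊆ ⋂₀ N :=
      image_sInter_subset_sInter_of_forall_image_subset fun b hb => (hN hb).2.2
    obtain ⟨lb, hlb, hlbN⟩ :=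
      hball _ (hcomplete N (fun b hb => (hN hb).1) hNne hNchain) hNf
    exact ⟨lb, hlb, fun b hb => hlbN.trans (sInter_subset_of_mem hb)⟩
  obtain ⟨m, hmb₀, hm⟩ := zorn_superset_nonempty _ hchain b₀ hb₀
  exact ⟨m, hmb₀.trans hb₀S, hm⟩

lemma image_eq_of_minimal_closedBall
    (hball : ∀ S : Set X, S.Nonempty → f '' S ⊆ S → ∃ b ∈ closedBalls B f, b ⊆ S)
    {m : Set X} (hm : Minimal (· ∈ closedBalls B f) m) : f '' m = m := by
  obtain ⟨-, hmne, hmf⟩ := hm.prop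
  obtain ⟨b, hb, hbm⟩ := hball _ (hmne.image f) (image_mono hmf)
  have hmb : m = b := hm.eq_of_superset hb (hbm.trans hmf)
  exact hmf.antisymm (hmb ▸ hbm)

end BallSpace

open BallSpace in
theorem fixedPoint_of_fContracting_balls_general {X : Type*} (B : Set (Set X))
    (hS1 : ∀ N ⊆ B, N.Nonempty → IsChain (· ⊆ ·) N → (⋂₀ N).Nonempty)
    (f : X → X)
    (hcontr : ∀ S : Set X, S.Nonempty → f '' S ⊆ S →
      ∃ b ∈ B, b ⊆ S ∧ f '' b ⊆ b ∧ ((∃ a, b = {a}) ∨ f '' b ⊂ b)) :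
    ∀ S : Set X, S.Nonempty → f '' S ⊆ S → ∃ z ∈ S, f z = z := by
  intro S hS hSf
  have hball := exists_closedBall_subset_of_contracting hcontr
  obtain ⟨m, hmS, hm⟩ := exists_minimal_closedBall_subset hS1 hball hS hSf
  have hfm : f '' m = m := image_eq_of_minimal_closedBall hball hm
  obtain ⟨b, hbB, hbm, hbf, hcases⟩ := hcontr m hm.prop.2.1 hm.prop.2.2
  rcases hcases with ⟨a, rfl⟩ | hssub
  · have hma : m = {a} := hm.eq_of_superset ⟨hbB, singleton_nonempty a, hbf⟩ hbm
    refine ⟨a, hmS (hma ▸ rfl), ?_⟩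
    simpa [hma] using hfm
  · have hmb : m = b := hm.eq_of_superset ⟨hbB, nonempty_of_ssubset' hssub, hbf⟩ hbm
    exact absurd (hmb ▸ hfm) hssub.ne

/-- If every nonempty f-closed subset of X contains an f-contracting ball, then f has
a fixed point in every nonempty f-closed subset. -/
theorem fixedPoint_of_fContracting_balls {X : Type*} [Nonempty X] (B : Set (Set X))
    (hBne : B.Nonempty) (hballs : ∀ b ∈ B, b.Nonempty)
    (hS1 : ∀ N ⊆ B, N.Nonempty → IsChain (· ⊆ ·) N → (⋂₀ N).Nonempty)
    (f : X → X)
    (hcontr : ∀ S : Set X, S.Nonempty → f '' S ⊆ S →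
      ∃ b ∈ B, b ⊆ S ∧ f '' b ⊆ b ∧ ((∃ a, b = {a}) ∨ f '' b ⊂ b)) :
    ∀ S : Set X, S.Nonempty → f '' S ⊆ S → ∃ z ∈ S, f z = z :=
  fixedPoint_of_fContracting_balls_general B hS1 f hcontr
end

section
/- Let (X,𝓑) be an S₂ ball space and f : X → X. If every ball in 𝓑 contains a fixed point of f or properly contains another ball, then f has a fixed point in every ball. -/
theorem exists_subset_minimal_of_chain_sInter {X : Type*} {B : Set (Set X)}
    (hS2 : ∀ N ⊆ B, N.Nonempty → IsChain (· ⊆ ·) N → ∃ b ∈ B, b ⊆ ⋂₀ N)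
    {b : Set X} (hb : b ∈ B) : ∃ m ⊆ b, Minimal (· ∈ B) m :=
  zorn_superset_nonempty B (fun N hNB hN hNne => by
    obtain ⟨lb, hlb, hsub⟩ := hS2 N hNB hNne hN
    exact ⟨lb, hlb, fun s hs => hsub.trans (Set.sInter_subset_of_mem hs)⟩) b hb

theorem fixedPoint_S2_general {X : Type*} (B : Set (Set X))
    (hS2 : ∀ N ⊆ B, N.Nonempty → IsChain (· ⊆ ·) N → ∃ b ∈ B, b ⊆ ⋂₀ N)
    (f : X → X)
    (hyp : ∀ b ∈ B, (∃ x ∈ b, f x = x) ∨ ∃ b' ∈ B, b' ⊂ b) :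
    ∀ b ∈ B, ∃ x ∈ b, f x = x := by
  intro b hb
  obtain ⟨m, hmb, hm⟩ := exists_subset_minimal_of_chain_sInter hS2 hb
  rcases hyp m hm.prop with ⟨x, hx, hfx⟩ | ⟨b', hb', hb'm⟩
  · exact ⟨x, hmb hx, hfx⟩
  · exact (hm.not_ssubset hb' hb'm).elim

/-- In an S₂ ball space, if every ball contains a fixed point of f or properly
contains another ball, then f has a fixed point in every ball. -/
theorem fixedPoint_S2 {X : Type*} [Nonempty X] (B : Set (Set X))
    (hBne : B.Nonempty) (hballs : ∀ b ∈ B, b.Nonempty)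
    (hS2 : ∀ N ⊆ B, N.Nonempty → IsChain (· ⊆ ·) N → ∃ b ∈ B, b ⊆ ⋂₀ N)
    (f : X → X)
    (hyp : ∀ b ∈ B, (∃ x ∈ b, f x = x) ∨ ∃ b' ∈ B, b' ⊂ b) :
    ∀ b ∈ B, ∃ x ∈ b, f x = x :=
  fixedPoint_S2_general B hS2 f hyp
end

section
/- Suppose for a function f : X → X there is a ball space (X,𝓑^f) such that every ball in 𝓑^f is f-closed, and the intersection of every nest of balls in 𝓑^f is either a singleton or contains a ball of 𝓑^f properly contained in each ball of the nest. Then f has a fixed point in every ball of 𝓑^f. -/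
/-!
Extend the ball `b` to a maximal nest (Hausdorff's maximality principle). By maximality no ball
lies strictly inside every ball of the nest, so its intersection is a singleton `{a}`; being an
intersection of `f`-closed sets it is `f`-closed, i.e. `f a = a`, and `a ∈ b`.
-/

open Set

theorem exists_isChain_mem_not_forall_lt {α : Type*} [Preorder α] {s : Set α} {a : α}
    (ha : a ∈ s) :
    ∃ N ⊆ s, a ∈ N ∧ IsChain (· ≤ ·) N ∧ ∀ b ∈ s, ¬∀ c ∈ N, b < c := by
  obtain ⟨F, haF⟩ := Flag.exists_mem (⟨a, ha⟩ : s)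
  refine ⟨Subtype.val '' (F : Set s), Subtype.coe_image_subset s _, mem_image_of_mem _ haF,
    F.chain_le.image_of_map_rel _ _ Subtype.val fun _ _ h ↦ h, fun b hb hlt ↦ ?_⟩
  have hbF : (⟨b, hb⟩ : s) ∈ F := Flag.mem_iff_forall_le_or_ge.2 fun c hc ↦
    Or.inl (hlt c (mem_image_of_mem _ hc)).le
  exact lt_irrefl b (hlt b (mem_image_of_mem _ hbF))

theorem fixedPoint_adapted_ballspace_general {X : Type*} (Bf : Set (Set X))
    (f : X → X)
    (hB1 : ∀ b ∈ Bf, f '' b ⊆ b)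
    (hB2 : ∀ N ⊆ Bf, N.Nonempty → IsChain (· ⊆ ·) N →
      (∃ a, ⋂₀ N = {a}) ∨ ∃ b ∈ Bf, b ⊆ ⋂₀ N ∧ ∀ b' ∈ N, b ⊂ b') :
    ∀ b ∈ Bf, ∃ z ∈ b, f z = z := by
  intro b₀ hb₀
  obtain ⟨N, hNB, hb₀N, hN, hN_max⟩ := exists_isChain_mem_not_forall_lt hb₀
  rcases hB2 N hNB ⟨b₀, hb₀N⟩ hN with ⟨a, ha⟩ | ⟨b, hb, -, hbN⟩
  · have hclosed : MapsTo f (⋂₀ N) (⋂₀ N) := fun x hx t ht ↦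
      hB1 t (hNB ht) ⟨x, hx t ht, rfl⟩
    rw [ha] at hclosed
    exact ⟨a, sInter_subset_of_mem hb₀N (ha ▸ rfl), hclosed rfl⟩
  · exact (hN_max b hb hbN).elim

/-- If every ball of 𝓑^f is f-closed and the intersection of every nest is a singleton
or contains a ball of 𝓑^f properly contained in each ball of the nest, then f has a
fixed point in every ball of 𝓑^f. -/
theorem fixedPoint_adapted_ballspace {X : Type*} [Nonempty X] (Bf : Set (Set X))
    (hBne : Bf.Nonempty) (hballs : ∀ b ∈ Bf, b.Nonempty)
    (f : X → X)
    (hB1 : ∀ b ∈ Bf, f '' b ⊆ b)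
    (hB2 : ∀ N ⊆ Bf, N.Nonempty → IsChain (· ⊆ ·) N →
      (∃ a, ⋂₀ N = {a}) ∨ ∃ b ∈ Bf, b ⊆ ⋂₀ N ∧ ∀ b' ∈ N, b ⊂ b') :
    ∀ b ∈ Bf, ∃ z ∈ b, f z = z :=
  fixedPoint_adapted_ballspace_general Bf f hB1 hB2
end

section
/- A metric space (X,d) is complete if and only if for every (equivalently, for some) subset S of the positive reals whose only accumulation point is 0, the ball space of closed metric balls with radii in S is spherically complete. -/
/-!
Any two balls of a chain have centres at distance at most the larger radius. In a complete
space, let `ρ` be the infimum of the radii in a chain of balls with radii in `S`. If `ρ` is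
attained, the centre of a smallest ball lies in every ball of the chain. Otherwise `ρ` is an
accumulation point of `S`, so `ρ = 0`, and the centres of balls with radii tending to `0` form a
Cauchy sequence whose limit lies in every ball.

Conversely, pick radii `s₀ > s₁ > ⋯` in `S` tending to `0`. A sequence with
`d(uₖ, uₖ₊₁) < sₖ - sₖ₊₁` gives the nested chain `B_{sₖ}(uₖ)`, and any point of its
intersection is the limit of the sequence. Since `{2⁻ⁿ}` is such a set `S`, "for every `S`" and
"for some `S`" are equivalent.
-/

open Filter Topology Set Metric

lemma accPt_of_tendsto {α ι : Type*} [TopologicalSpace α] {l : Filter ι} [l.NeBot]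
    {u : ι → α} {a : α} {C : Set α} (hu : Tendsto u l (𝓝 a)) (hne : ∀ i, u i ≠ a)
    (hmem : ∀ i, u i ∈ C) : AccPt a (𝓟 C) :=
  accPt_iff_frequently.2 <| hu.frequently <| Frequently.of_forall fun i => ⟨hne i, hmem i⟩

lemma eq_of_accPt_range_of_tendsto {α : Type*} [TopologicalSpace α] [T2Space α]
    {u : ℕ → α} {a x : α} (hu : Tendsto u atTop (𝓝 a)) (hx : AccPt x (𝓟 (range u))) :
    x = a := by
  by_contra hxa
  obtain ⟨U, V, hU, hV, hUV⟩ := t2_separation_nhds hxa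
  have hfin : {n | u n ∈ U}.Finite := by
    rw [← Nat.cofinite_eq_atTop] at hu
    exact (hu.eventually hV).subset fun n (hn : u n ∈ U) (hnV : u n ∈ V) =>
      hUV.notMem_of_mem_left hn hnV
  refine Set.Infinite.of_accPt (hx.nhds_inter hU) ((hfin.image u).subset ?_)
  rintro _ ⟨hxU, n, rfl⟩
  exact ⟨n, hxU, rfl⟩

lemma exists_seq_strictAnti_tendsto_of_accPt {α : Type*} [TopologicalSpace α] [LinearOrder α]
    [OrderTopology α] [FirstCountableTopology α] {S : Set α} {a : α} (hS : S ⊆ Ioi a)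
    (ha : AccPt a (𝓟 S)) :
    ∃ u : ℕ → α, StrictAnti u ∧ Tendsto u atTop (𝓝 a) ∧ ∀ n, u n ∈ S := by
  have hglb : IsGLB S a :=
    isGLB_of_mem_closure (fun _ hs => (hS hs).le) (mem_closure_iff_clusterPt.2 ha.clusterPt)
  obtain ⟨u, hu, -, hlim, huS⟩ :=
    hglb.exists_seq_strictAnti_tendsto_of_notMem (fun h => lt_irrefl a (hS h))
      (Set.Infinite.of_accPt ha).nonempty
  exact ⟨u, hu, hlim, huS⟩

def closedBallSpace (X : Type*) [PseudoMetricSpace X] (S : Set ℝ) : Set (Set X) :=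
  {b | ∃ (x : X) (r : ℝ), r ∈ S ∧ b = closedBall x r}

def IsSphericallyComplete {X : Type*} (𝓑 : Set (Set X)) : Prop :=
  ∀ N ⊆ 𝓑, N.Nonempty → IsChain (· ⊆ ·) N → (⋂₀ N).Nonempty

section

variable {X : Type*} [PseudoMetricSpace X]

lemma closedBallSpace_mono {S T : Set ℝ} (h : S ⊆ T) :
    closedBallSpace X S ⊆ closedBallSpace X T := by
  rintro _ ⟨x, r, hr, rfl⟩
  exact ⟨x, r, h hr, rfl⟩

lemma cauchySeq_of_dist_le_max {β : Type*} [Nonempty β] [SemilatticeSup β] {c : β → X}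
    {r : β → ℝ} (hd : ∀ m n, dist (c m) (c n) ≤ max (r m) (r n))
    (hr : Tendsto r atTop (𝓝 0)) : CauchySeq c := by
  refine Metric.cauchySeq_iff'.2 fun ε hε => ?_
  obtain ⟨N, hN⟩ := eventually_atTop.1 (hr.eventually (gt_mem_nhds hε))
  exact ⟨N, fun n hn => (hd n N).trans_lt (max_lt (hN n hn) (hN N le_rfl))⟩

namespace IsChain

variable {N : Set (Set X)} (hN : IsChain (· ⊆ ·) N)
include hN

lemma dist_le_max {x y : X} {r s : ℝ} (hx : closedBall x r ∈ N) (hy : closedBall y s ∈ N)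
    (hr : 0 ≤ r) (hs : 0 ≤ s) : dist x y ≤ max r s := by
  rcases hN.total hx hy with h | h
  · exact (mem_closedBall.1 (h (mem_closedBall_self hr))).trans (le_max_right r s)
  · rw [dist_comm]
    exact (mem_closedBall.1 (h (mem_closedBall_self hs))).trans (le_max_left r s)

lemma mem_sInter_of_closedBall_mem {x : X} {ρ : ℝ} (hNρ : N ⊆ closedBallSpace X (Ici ρ))
    (hρ : 0 ≤ ρ) (hx : closedBall x ρ ∈ N) : x ∈ ⋂₀ N := by
  intro b hb
  obtain ⟨y, s, hs : ρ ≤ s, rfl⟩ := hNρ hb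
  simpa [max_eq_right hs] using hN.dist_le_max hx hb hρ (hρ.trans hs)

lemma sInter_nonempty_of_tendsto_radius [CompleteSpace X]
    (hN0 : N ⊆ closedBallSpace X (Ici 0)) {c : ℕ → X} {r : ℕ → ℝ}
    (hc : ∀ n, closedBall (c n) (r n) ∈ N) (hr0 : ∀ n, 0 ≤ r n)
    (hr : Tendsto r atTop (𝓝 0)) : (⋂₀ N).Nonempty := by
  obtain ⟨x, hx⟩ := cauchySeq_tendsto_of_complete <|
    cauchySeq_of_dist_le_max (fun m n => hN.dist_le_max (hc m) (hc n) (hr0 m) (hr0 n)) hr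
  refine ⟨x, fun b hb => ?_⟩
  obtain ⟨y, s, hs : 0 ≤ s, rfl⟩ := hN0 hb
  have hmax : Tendsto (fun n => max (r n) s) atTop (𝓝 s) := by
    simpa [max_eq_right hs] using hr.max (tendsto_const_nhds (x := s))
  exact le_of_tendsto_of_tendsto' (hx.dist tendsto_const_nhds) hmax
    fun n => hN.dist_le_max (hc n) hb (hr0 n) hs

end IsChain

theorem isSphericallyComplete_closedBallSpace [CompleteSpace X] {S : Set ℝ} (hS : S ⊆ Ici 0)
    (hacc : ∀ r > 0, ¬AccPt r (𝓟 S)) : IsSphericallyComplete (closedBallSpace X S) := by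
  intro N hNS hNne hN
  set R := {r ∈ S | ∃ x, closedBall x r ∈ N}
  have hRne : R.Nonempty := by
    obtain ⟨_, hb⟩ := hNne
    obtain ⟨x, r, hr, rfl⟩ := hNS hb
    exact ⟨r, hr, x, hb⟩
  have hglb : IsGLB R (sInf R) := isGLB_csInf hRne ⟨0, fun r hr => hS hr.1⟩
  by_cases hρ : sInf R ∈ R
  · obtain ⟨hρS, x, hx⟩ := hρ
    refine ⟨x, hN.mem_sInter_of_closedBall_mem (fun b hb => ?_) (hS hρS) hx⟩
    obtain ⟨y, s, hs, rfl⟩ := hNS hb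
    exact ⟨y, s, hglb.1 ⟨hs, y, hb⟩, rfl⟩
  · obtain ⟨u, -, hρu, hu, huR⟩ := hglb.exists_seq_strictAnti_tendsto_of_notMem hρ hRne
    have hρ0 : sInf R = 0 := by
      refine le_antisymm (not_lt.1 fun hpos => hacc _ hpos ?_) (hglb.2 fun r hr => hS hr.1)
      exact accPt_of_tendsto hu (fun n => (hρu n).ne') fun n => (huR n).1
    choose c hc using fun n => (huR n).2
    exact hN.sInter_nonempty_of_tendsto_radius (hNS.trans (closedBallSpace_mono hS)) hc
      (fun n => hS (huR n).1) (hρ0 ▸ hu)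

theorem completeSpace_of_isSphericallyComplete {S : Set ℝ} (hS : S ⊆ Ioi 0)
    (h0 : AccPt 0 (𝓟 S)) (h : IsSphericallyComplete (closedBallSpace X S)) : CompleteSpace X := by
  obtain ⟨s, hs, hs0, hsS⟩ := exists_seq_strictAnti_tendsto_of_accPt hS h0
  refine complete_of_convergent_controlled_sequences (fun k => s k - s (k + 1))
    (fun k => sub_pos.2 (hs k.lt_succ_self)) fun u hu => ?_
  set b : ℕ → Set X := fun k => closedBall (u k) (s k)
  have hb : Antitone b := antitone_nat_of_succ_le fun k => by
    refine closedBall_subset_closedBall' ?_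
    linarith [hu k (k + 1) k k.le_succ le_rfl]
  obtain ⟨x, hx⟩ := h (range b) (range_subset_iff.2 fun k => ⟨u k, s k, hsS k, rfl⟩)
    (range_nonempty b) hb.isChain_range
  refine ⟨x, tendsto_iff_dist_tendsto_zero.2 (squeeze_zero (fun _ => dist_nonneg) ?_ hs0)⟩
  exact fun k => mem_closedBall'.1 (hx (b k) ⟨k, rfl⟩)

end

/-- A metric space is complete iff for every (equivalently, for some) set S of positive
reals with 0 as its only accumulation point, the ball space of closed metric balls with
radii in S is spherically complete. -/
theorem complete_iff_ballspace_radii {X : Type*} [MetricSpace X] :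
    (CompleteSpace X ↔
      ∀ S : Set ℝ, S ⊆ Set.Ioi (0:ℝ) → AccPt (0:ℝ) (𝓟 S) →
        (∀ r : ℝ, AccPt r (𝓟 S) → r = 0) →
        (∀ N ⊆ {b : Set X | ∃ (x : X) (r : ℝ), r ∈ S ∧ b = Metric.closedBall x r},
          N.Nonempty → IsChain (· ⊆ ·) N → (⋂₀ N).Nonempty)) ∧
    (CompleteSpace X ↔
      ∃ S : Set ℝ, S ⊆ Set.Ioi (0:ℝ) ∧ AccPt (0:ℝ) (𝓟 S) ∧
        (∀ r : ℝ, AccPt r (𝓟 S) → r = 0) ∧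
        (∀ N ⊆ {b : Set X | ∃ (x : X) (r : ℝ), r ∈ S ∧ b = Metric.closedBall x r},
          N.Nonempty → IsChain (· ⊆ ·) N → (⋂₀ N).Nonempty)) := by
  have forward {S : Set ℝ} (hS : S ⊆ Ioi 0) (hacc : ∀ r, AccPt r (𝓟 S) → r = 0)
      [CompleteSpace X] : IsSphericallyComplete (closedBallSpace X S) :=
    isSphericallyComplete_closedBallSpace (hS.trans Ioi_subset_Ici_self)
      fun r hr h => hr.ne' (hacc r h)
  set S₀ := range fun n : ℕ => ((1 : ℝ) / 2) ^ n
  have hlim : Tendsto (fun n : ℕ => ((1 : ℝ) / 2) ^ n) atTop (𝓝 0) :=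
    tendsto_pow_atTop_nhds_zero_of_lt_one (by norm_num) (by norm_num)
  have hS₀ : S₀ ⊆ Ioi 0 := range_subset_iff.2 fun n => mem_Ioi.2 (by positivity)
  have h0 : AccPt 0 (𝓟 S₀) := accPt_of_tendsto hlim (fun n => (hS₀ ⟨n, rfl⟩).ne')
    fun n => ⟨n, rfl⟩
  have hacc : ∀ r, AccPt r (𝓟 S₀) → r = 0 := fun _ => eq_of_accPt_range_of_tendsto hlim
  refine ⟨⟨fun _ S hS _ hSacc => forward hS hSacc, fun h => ?_⟩,
    ⟨fun _ => ⟨S₀, hS₀, h0, hacc, forward hS₀ hacc⟩, ?_⟩⟩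
  · exact completeSpace_of_isSphericallyComplete hS₀ h0 (h S₀ hS₀ h0 hacc)
  · rintro ⟨S, hS, h0, -, h⟩
    exact completeSpace_of_isSphericallyComplete hS h0 h
end

section
/- Let X be a compact topological space and f : X → X a closed map. Assume that for every x ∈ X with fx ≠ x there is a closed subset B of X with x ∈ B and x ∉ f(B) ⊆ B. Then f has a fixed point. -/
/-! By Zorn's lemma and Cantor's intersection theorem, a compact space contains a minimal
nonempty closed set `m` with `f '' m ⊆ m`. As `f` is closed, `f '' m` is again such a set,
so `f '' m = m`. If `x ∈ m` were not fixed, the set `B` provided for `x` would meet `m`, so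
minimality forces `m ⊆ m ∩ B`, and then `x ∈ m = f '' m ⊆ f '' B`, which is excluded. -/

open Set

section

variable {X : Type*} [TopologicalSpace X] {f : X → X} {s m B : Set X}

theorem IsClosed.exists_minimal_nonempty_isClosed_image_subset [CompactSpace X]
    (hs : IsClosed s) (hne : s.Nonempty) (hfs : f '' s ⊆ s) :
    ∃ m ⊆ s, Minimal (fun B => B.Nonempty ∧ IsClosed B ∧ f '' B ⊆ B) m := by
  refine zorn_superset_nonempty _ ?_ s ⟨hne, hs, hfs⟩
  rintro c hcS hchain ⟨B₀, hB₀⟩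
  have : Nonempty c := ⟨⟨B₀, hB₀⟩⟩
  refine ⟨⋂₀ c, ⟨?_, isClosed_sInter fun B hB => (hcS hB).2.1, ?_⟩,
    fun B hB => sInter_subset_of_mem hB⟩
  · exact IsCompact.nonempty_sInter_of_directed_nonempty_isCompact_isClosed
      (IsChain.directedOn (r := fun B C : Set X => B ⊇ C) hchain.symm) (fun B hB => (hcS hB).1)
      (fun B hB => (hcS hB).2.1.isCompact) fun B hB => (hcS hB).2.1
  · exact (image_sInter_subset c f).trans
      (subset_sInter fun B hB => (biInter_subset_of_mem hB).trans (hcS hB).2.2)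

theorem image_eq_of_minimal_nonempty_isClosed_image_subset (hf : IsClosedMap f)
    (hm : Minimal (fun B => B.Nonempty ∧ IsClosed B ∧ f '' B ⊆ B) m) : f '' m = m :=
  hm.prop.2.2.antisymm <|
    hm.le_of_le ⟨hm.prop.1.image f, hf m hm.prop.2.1, image_mono hm.prop.2.2⟩ hm.prop.2.2

theorem subset_of_minimal_nonempty_isClosed_image_subset
    (hm : Minimal (fun B => B.Nonempty ∧ IsClosed B ∧ f '' B ⊆ B) m)
    (hB : IsClosed B) (hfB : f '' B ⊆ B) (hmB : (m ∩ B).Nonempty) : m ⊆ B :=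
  (hm.le_of_le ⟨hmB, hm.prop.2.1.inter hB,
      (image_inter_subset f m B).trans (inter_subset_inter hm.prop.2.2 hfB)⟩
    inter_subset_left).trans inter_subset_right

end

/-- Take a compact space X and a closed map f : X → X. If for every x with fx ≠ x there
is a closed set B with x ∈ B and x ∉ f(B) ⊆ B, then f has a fixed point. -/
theorem fixedPoint_compact_closedMap {X : Type*} [TopologicalSpace X] [CompactSpace X]
    [Nonempty X] (f : X → X) (hf : IsClosedMap f)
    (hyp : ∀ x : X, f x ≠ x →
      ∃ B : Set X, IsClosed B ∧ x ∈ B ∧ x ∉ f '' B ∧ f '' B ⊆ B) :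
    ∃ x : X, f x = x := by
  obtain ⟨m, -, hm⟩ := isClosed_univ.exists_minimal_nonempty_isClosed_image_subset (f := f)
    univ_nonempty (subset_univ _)
  obtain ⟨x, hx⟩ := hm.prop.1
  by_contra! hfix
  obtain ⟨B, hB, hxB, hxfB, hfB⟩ := hyp x (hfix x)
  have hmB := subset_of_minimal_nonempty_isClosed_image_subset hm hB hfB ⟨x, hx, hxB⟩
  rw [← image_eq_of_minimal_nonempty_isClosed_image_subset hf hm] at hx
  exact hxfB (image_mono hmB hx)
end

section
/- For a poset (T,≤), the following are equivalent: (a) (T,≤) is chain complete; (b) (T,≤) is directed complete; (c) the ball space of principal final segments [a,∞) is S₅ (the intersection of every nest of such segments is itself a segment [b,∞)); (d) the same for every directed system of segments. -/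
/-!
The three conditions on final segments translate to conditions on their generators: a family
`N` of principal final segments is `Ici '' A` for `A = {a | Ici a ∈ N}`, nests and directed systems
of segments correspond to chains and directed subsets of `A`, and `⋂₀ N = upperBounds A`, which is
a principal final segment `Ici s` exactly when `s` is a least upper bound of `A`.

The substantial part is Iwamura's lemma: a chain complete preorder is directed complete. By
induction on `#D`: a countable directed `D` has a cofinal increasing sequence; an uncountable one,
well-ordered in order type `(#D).ord`, is the union of the increasing chain of directed subsets
generated by its initial segments, each of smaller cardinality. In both cases `D` is the union of
a monotone family of sets with least upper bounds, whose supremum is that of the chain of their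
suprema.
-/

open Set Cardinal

section Completeness

variable (T : Type*) [Preorder T]

def ChainComplete : Prop :=
  ∀ C : Set T, C.Nonempty → IsChain (· ≤ ·) C → ∃ s, IsLUB C s

def DirectedComplete : Prop :=
  ∀ D : Set T, D.Nonempty → DirectedOn (· ≤ ·) D → ∃ s, IsLUB D s

def principalFinalSegments : Set (Set T) :=
  {b | ∃ a : T, b = Ici a}

end Completeness

section BallSpace

variable {X : Type*} (B : Set (Set X))

def IsS₅ : Prop :=
  ∀ N ⊆ B, N.Nonempty → IsChain (· ⊆ ·) N → ⋂₀ N ∈ B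

def IsDirectedS₅ : Prop :=
  ∀ D ⊆ B, D.Nonempty → (∀ b₁ ∈ D, ∀ b₂ ∈ D, ∃ b ∈ D, b ⊆ b₁ ∩ b₂) → ⋂₀ D ∈ B

end BallSpace

section BinaryClosure

variable {α : Type*} (u : α → α → α)

def binaryClosureStep (A : Set α) : Set α :=
  A ∪ image2 u A A

def binaryClosure (S : Set α) : Set α :=
  ⋃ n, (binaryClosureStep u)^[n] S

variable {u}

theorem monotone_iterate_binaryClosureStep (S : Set α) :
    Monotone fun n => (binaryClosureStep u)^[n] S :=
  monotone_nat_of_le_succ fun n => by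
    simpa only [Function.iterate_succ_apply', binaryClosureStep] using subset_union_left

theorem subset_binaryClosure (S : Set α) : S ⊆ binaryClosure u S :=
  subset_iUnion (fun n => (binaryClosureStep u)^[n] S) 0

theorem binaryClosure_mono : Monotone (binaryClosure (α := α) u) := by
  intro S S' h
  refine iUnion_mono fun n => ?_
  induction n with
  | zero => exact h
  | succ n ih =>
    simp only [Function.iterate_succ_apply', binaryClosureStep]
    exact union_subset_union ih (image2_subset ih ih)

theorem apply_mem_binaryClosure {S : Set α} {x y : α} (hx : x ∈ binaryClosure u S)
    (hy : y ∈ binaryClosure u S) : u x y ∈ binaryClosure u S := by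
  obtain ⟨m, hm⟩ := mem_iUnion.mp hx
  obtain ⟨n, hn⟩ := mem_iUnion.mp hy
  refine mem_iUnion.mpr ⟨max m n + 1, ?_⟩
  rw [Function.iterate_succ_apply', binaryClosureStep]
  exact mem_union_right _ (mem_image2_of_mem (monotone_iterate_binaryClosureStep S (le_max_left m n) hm)
    (monotone_iterate_binaryClosureStep S (le_max_right m n) hn))

theorem mk_binaryClosure_le (S : Set α) : #(binaryClosure u S) ≤ max #S ℵ₀ := by
  set m := max #S ℵ₀
  have hm : ℵ₀ ≤ m := le_max_right _ _
  have hstage : ∀ n, #((binaryClosureStep u)^[n] S) ≤ m := by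
    intro n
    induction n with
    | zero => exact le_max_left _ _
    | succ n ih =>
      rw [Function.iterate_succ_apply', binaryClosureStep]
      calc _ ≤ _ + _ := mk_union_le _ _
        _ ≤ m + m * m := add_le_add ih (mk_image2_le.trans (mul_le_mul' ih ih))
        _ = m := by rw [mul_eq_self hm, add_eq_self hm]
  calc #(binaryClosure u S) ≤ ℵ₀ * ⨆ n, #((binaryClosureStep u)^[n] S) := by
        simpa [binaryClosure] using mk_iUnion_le_lift fun n => (binaryClosureStep u)^[n] S
    _ ≤ ℵ₀ * m := mul_le_mul' le_rfl (ciSup_le' hstage)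
    _ = m := aleph0_mul_eq hm

theorem directedOn_image_binaryClosure {β : Type*} [Preorder β] {f : α → β}
    (hu : ∀ x y, f x ≤ f (u x y) ∧ f y ≤ f (u x y)) (S : Set α) :
    DirectedOn (· ≤ ·) (f '' binaryClosure u S) := by
  rintro _ ⟨x, hx, rfl⟩ _ ⟨y, hy, rfl⟩
  exact ⟨f (u x y), mem_image_of_mem f (apply_mem_binaryClosure hx hy), hu x y⟩

end BinaryClosure

namespace ChainComplete

variable {T : Type*} [Preorder T]

theorem exists_isLUB_iUnion (hT : ChainComplete T) {ι : Type*} [LinearOrder ι] [Nonempty ι]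
    {E : ι → Set T} (hE : Monotone E) (h : ∀ i, ∃ s, IsLUB (E i) s) :
    ∃ s, IsLUB (⋃ i, E i) s := by
  choose s hs using h
  obtain ⟨t, ht⟩ := hT (range s) (range_nonempty s)
    (Monotone.isChain_range fun i j hij => (hs i).mono (hs j) (hE hij))
  exact ⟨t, (isLUB_iUnion_iff_of_isLUB hs t).mp ht⟩

theorem exists_isLUB_of_countable (hT : ChainComplete T) {D : Set T} (hD : DirectedOn (· ≤ ·) D)
    (hne : D.Nonempty) (hc : D.Countable) : ∃ s, IsLUB D s := by
  have : Encodable D := hc.toEncodable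
  have : Inhabited D := ⟨⟨_, hne.some_mem⟩⟩
  have hval := directedOn_iff_directed.mp hD
  set x : ℕ → T := Subtype.val ∘ hval.sequence Subtype.val
  have hxD : ∀ n, x n ∈ D := fun n => (hval.sequence _ n).2
  have hD_eq : ⋃ n, D ∩ Iic (x n) = D :=
    iUnion_subset (fun _ => inter_subset_left) |>.antisymm fun d hd =>
      mem_iUnion.mpr ⟨_, hd, hval.le_sequence ⟨d, hd⟩⟩
  rw [← hD_eq]
  exact hT.exists_isLUB_iUnion (fun m n hmn => inter_subset_inter_right D
    (Iic_subset_Iic.mpr (hval.sequence_mono hmn)))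
    fun n => ⟨x n, IsGreatest.isLUB ⟨⟨hxD n, le_rfl⟩, fun _ h => h.2⟩⟩

theorem exists_isLUB_of_aleph0_lt (hT : ChainComplete T) {D : Set T} (hD : DirectedOn (· ≤ ·) D)
    (hne : D.Nonempty) (hc : ℵ₀ < #D)
    (ih : ∀ E : Set T, #E < #D → E.Nonempty → DirectedOn (· ≤ ·) E → ∃ s, IsLUB E s) :
    ∃ s, IsLUB D s := by
  obtain ⟨e⟩ : Nonempty ((#D).ord.ToType ≃ D) := Cardinal.eq.mp (mk_ord_toType _)
  have : Nonempty (#D).ord.ToType := ⟨e.symm ⟨_, hne.some_mem⟩⟩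
  set f : (#D).ord.ToType → T := (↑) ∘ e
  have hf : Directed (· ≤ ·) f := by
    rw [← directedOn_range, e.surjective.range_comp, Subtype.range_coe]
    exact hD
  choose u hu using hf
  have hlt (i : (#D).ord.ToType) : #(Iic i) < #D := by
    simpa only [mk_ord_toType] using mk_Iic_lt i (by rw [mk_ord_toType, Ordinal.type_toType])
      (hc.le.trans_eq (mk_ord_toType _).symm)
  have hD_eq : ⋃ i, f '' binaryClosure u (Iic i) = D := by
    refine iUnion_subset (fun i => ?_) |>.antisymm fun d hd => mem_iUnion.mpr ?_
    · rintro _ ⟨j, -, rfl⟩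
      exact (e j).2
    · refine ⟨e.symm ⟨d, hd⟩, e.symm ⟨d, hd⟩, subset_binaryClosure _ self_mem_Iic, ?_⟩
      simp [f]
  rw [← hD_eq]
  refine hT.exists_isLUB_iUnion (fun i j hij => image_mono (binaryClosure_mono
    (Iic_subset_Iic.mpr hij))) fun i => ih _ ?_ ⟨f i, i, subset_binaryClosure _ self_mem_Iic, rfl⟩
    (directedOn_image_binaryClosure hu _)
  calc #(f '' binaryClosure u (Iic i)) ≤ #(binaryClosure u (Iic i)) := mk_image_le
    _ ≤ max #(Iic i) ℵ₀ := mk_binaryClosure_le _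
    _ < #D := max_lt (hlt i) hc

theorem directedComplete (hT : ChainComplete T) : DirectedComplete T := by
  suffices ∀ κ : Cardinal, ∀ D : Set T, #D = κ → D.Nonempty → DirectedOn (· ≤ ·) D →
      ∃ s, IsLUB D s from fun D => this _ D rfl
  intro κ
  induction κ using WellFoundedLT.induction with
  | _ κ ih =>
    rintro D rfl hne hD
    rcases le_or_gt #D ℵ₀ with hc | hc
    · exact hT.exists_isLUB_of_countable hD hne (le_aleph0_iff_set_countable.mp hc)
    · exact hT.exists_isLUB_of_aleph0_lt hD hne hc fun E hE => ih _ hE E rfl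

end ChainComplete

theorem chainComplete_iff_directedComplete {T : Type*} [Preorder T] :
    ChainComplete T ↔ DirectedComplete T :=
  ⟨ChainComplete.directedComplete, fun h C hne hC => h C hne hC.directedOn⟩

section PrincipalFinalSegments

variable {T : Type*} [Preorder T]

theorem forall_subset_principalFinalSegments_iff {p : Set (Set T) → Prop} :
    (∀ N ⊆ principalFinalSegments T, p N) ↔ ∀ A : Set T, p (Ici '' A) := by
  refine ⟨fun h A => h _ ?_, fun h N hN => ?_⟩
  · rintro _ ⟨a, -, rfl⟩
    exact ⟨a, rfl⟩
  · have hN : Ici '' (Ici ⁻¹' N) = N := image_preimage_eq_of_subset fun b hb =>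
      let ⟨a, ha⟩ := hN hb
      ⟨a, ha.symm⟩
    exact hN ▸ h _

theorem sInter_image_Ici_mem_principalFinalSegments_iff {A : Set T} :
    ⋂₀ (Ici '' A) ∈ principalFinalSegments T ↔ ∃ s, IsLUB A s := by
  have hA : ⋂₀ (Ici '' A) = upperBounds A := by
    ext
    simp [upperBounds]
  simp only [principalFinalSegments, hA, Set.ext_iff, mem_Ici, isLUB_iff_le_iff]
  exact exists_congr fun s => forall_congr' fun b => Iff.comm

theorem isChain_image_Ici_iff {A : Set T} : IsChain (· ⊆ ·) (Ici '' A) ↔ IsChain (· ≤ ·) A := by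
  refine ⟨fun h a ha b hb _ => ?_, antitone_Ici.isChain_image⟩
  exact (h.total (mem_image_of_mem _ ha) (mem_image_of_mem _ hb)).symm.imp
    Ici_subset_Ici.mp Ici_subset_Ici.mp

theorem exists_subset_inter_image_Ici_iff_directedOn {A : Set T} :
    (∀ b₁ ∈ Ici '' A, ∀ b₂ ∈ Ici '' A, ∃ b ∈ Ici '' A, b ⊆ b₁ ∩ b₂) ↔ DirectedOn (· ≤ ·) A := by
  simp only [forall_mem_image, exists_mem_image, subset_inter_iff, Ici_subset_Ici, DirectedOn]

theorem chainComplete_iff_isS₅_principalFinalSegments :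
    ChainComplete T ↔ IsS₅ (principalFinalSegments T) := by
  simp only [IsS₅, forall_subset_principalFinalSegments_iff, image_nonempty, isChain_image_Ici_iff,
    sInter_image_Ici_mem_principalFinalSegments_iff, ChainComplete]

theorem directedComplete_iff_isDirectedS₅_principalFinalSegments :
    DirectedComplete T ↔ IsDirectedS₅ (principalFinalSegments T) := by
  simp only [IsDirectedS₅, forall_subset_principalFinalSegments_iff, image_nonempty,
    exists_subset_inter_image_Ici_iff_directedOn, sInter_image_Ici_mem_principalFinalSegments_iff,
    DirectedComplete]

end PrincipalFinalSegments

/-- For a poset (T,≤) the following are equivalent: chain complete, directed complete,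
the ball space of principal final segments is S₅, and it is S₅ᵈ. -/
theorem chainComplete_iff_pfs_S5 {T : Type*} [PartialOrder T] :
    ((∀ C : Set T, C.Nonempty → IsChain (· ≤ ·) C → ∃ s, IsLUB C s) ↔
     (∀ D : Set T, D.Nonempty → DirectedOn (· ≤ ·) D → ∃ s, IsLUB D s)) ∧
    ((∀ C : Set T, C.Nonempty → IsChain (· ≤ ·) C → ∃ s, IsLUB C s) ↔
     (∀ N ⊆ {b : Set T | ∃ a : T, b = Set.Ici a}, N.Nonempty → IsChain (· ⊆ ·) N →
        ⋂₀ N ∈ {b : Set T | ∃ a : T, b = Set.Ici a})) ∧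
    ((∀ C : Set T, C.Nonempty → IsChain (· ≤ ·) C → ∃ s, IsLUB C s) ↔
     (∀ D ⊆ {b : Set T | ∃ a : T, b = Set.Ici a}, D.Nonempty →
        (∀ b₁ ∈ D, ∀ b₂ ∈ D, ∃ b ∈ D, b ⊆ b₁ ∩ b₂) →
        ⋂₀ D ∈ {b : Set T | ∃ a : T, b = Set.Ici a})) :=
  ⟨chainComplete_iff_directedComplete, chainComplete_iff_isS₅_principalFinalSegments,
    chainComplete_iff_directedComplete.trans
      directedComplete_iff_isDirectedS₅_principalFinalSegments⟩
end

section
/- If (X,𝓑) is an S₁ᶜ ball space (every centered system of balls has nonempty intersection), then the ball space obtained by closing 𝓑 under finite unions is also S₁ᶜ. -/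
/-!
Extend a centered system `C` of finite unions of balls to an ultrafilter `U`. Every `u ∈ C` is a
finite union of balls lying in `U`, so one of those balls already lies in `U`. The balls in `U`
form a centered system, whose nonempty intersection is contained in every member of `C`.
-/

open Set Filter

def IsCentered {X : Type*} (C : Set (Set X)) : Prop :=
  ∀ F : Finset (Set X), ↑F ⊆ C → F.Nonempty → (⋂₀ (F : Set (Set X))).Nonempty

theorem Ultrafilter.isCentered_of_subset {X : Type*} (U : Ultrafilter X) {C : Set (Set X)}
    (hC : C ⊆ U.sets) : IsCentered C := fun F hF _ =>
  U.nonempty_of_mem <| (sInter_mem F.finite_toSet).2 fun _ hs => hC (hF hs)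

theorem IsCentered.exists_ultrafilter {X : Type*} {C : Set (Set X)} (hC : IsCentered C)
    (hCne : C.Nonempty) : ∃ U : Ultrafilter X, C ⊆ U.sets := by
  refine Ultrafilter.exists_ultrafilter_of_finite_inter_nonempty C fun F hF => ?_
  rcases F.eq_empty_or_nonempty with rfl | hFne
  · obtain ⟨c, hc⟩ := hCne
    obtain ⟨x, -⟩ := hC {c} (by simpa using hc) (Finset.singleton_nonempty c)
    exact ⟨x, by simp⟩
  · exact hC F hF hFne

theorem finiteUnions_S1c_general {X : Type*} (B : Set (Set X))
    (hS1c : ∀ C ⊆ B, C.Nonempty →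
      (∀ F : Finset (Set X), ↑F ⊆ C → F.Nonempty → (⋂₀ (F : Set (Set X))).Nonempty) →
      (⋂₀ C).Nonempty) :
    ∀ C ⊆ {u : Set X | ∃ S : Set (Set X), S.Finite ∧ S.Nonempty ∧ S ⊆ B ∧ u = ⋃₀ S},
      C.Nonempty →
      (∀ F : Finset (Set X), ↑F ⊆ C → F.Nonempty → (⋂₀ (F : Set (Set X))).Nonempty) →
      (⋂₀ C).Nonempty := by
  intro C hCunions hCne hC
  obtain ⟨U, hCU⟩ := IsCentered.exists_ultrafilter hC hCne
  have hball : ∀ u ∈ C, ∃ b ∈ B ∩ U.sets, b ⊆ u := by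
    intro u hu
    obtain ⟨S, hSfin, -, hSB, rfl⟩ := hCunions hu
    obtain ⟨b, hbS, hbU⟩ := (Ultrafilter.finite_sUnion_mem_iff hSfin).1 (hCU hu)
    exact ⟨b, ⟨hSB hbS, hbU⟩, subset_sUnion_of_mem hbS⟩
  have hballs_ne : (B ∩ U.sets).Nonempty := by
    obtain ⟨u, hu⟩ := hCne
    obtain ⟨b, hb, -⟩ := hball u hu
    exact ⟨b, hb⟩
  obtain ⟨x, hx⟩ := hS1c _ inter_subset_left hballs_ne
    (U.isCentered_of_subset inter_subset_right)
  refine ⟨x, fun u hu => ?_⟩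
  obtain ⟨b, hb, hbu⟩ := hball u hu
  exact hbu (hx b hb)

/-- If (X,𝓑) is an S₁ᶜ ball space, then the ball space obtained by closing 𝓑 under
finite unions is also S₁ᶜ. -/
theorem finiteUnions_S1c {X : Type*} [Nonempty X] (B : Set (Set X))
    (hBne : B.Nonempty) (hballs : ∀ b ∈ B, b.Nonempty)
    (hS1c : ∀ C ⊆ B, C.Nonempty →
      (∀ F : Finset (Set X), ↑F ⊆ C → F.Nonempty → (⋂₀ (F : Set (Set X))).Nonempty) →
      (⋂₀ C).Nonempty) :
    ∀ C ⊆ {u : Set X | ∃ S : Set (Set X), S.Finite ∧ S.Nonempty ∧ S ⊆ B ∧ u = ⋃₀ S},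
      C.Nonempty →
      (∀ F : Finset (Set X), ↑F ⊆ C → F.Nonempty → (⋂₀ (F : Set (Set X))).Nonempty) →
      (⋂₀ C).Nonempty :=
  finiteUnions_S1c_general B hS1c
end

section
/- Given a family of ball spaces (X_j, 𝓑_j), j ∈ J, the box product (∏X_j, {∏B_j : B_j ∈ 𝓑_j for all j}) is spherically complete if and only if each (X_j, 𝓑_j) is spherically complete. -/
/-! In a spherically complete space every ball is nonempty (a singleton is a chain), so a box
ball is the product of its coordinate projections. A chain of box balls therefore projects to a
chain in each factor, and a point chosen coordinatewise in the intersections of these lies in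
every ball of the chain. Conversely, a chain in the factor `j` becomes a chain of box balls by
freezing the other coordinates at fixed balls, and the `j`-th coordinate of a point in its
intersection lies in every ball of the chain. -/

open Set Function

def SphericallyComplete {α : Type*} (𝓑 : Set (Set α)) : Prop :=
  ∀ N ⊆ 𝓑, N.Nonempty → IsChain (· ⊆ ·) N → (⋂₀ N).Nonempty

def boxBalls {J : Type*} {X : J → Type*} (B : ∀ j, Set (Set (X j))) : Set (Set (∀ j, X j)) :=
  {b | ∃ c : ∀ j, Set (X j), (∀ j, c j ∈ B j) ∧ b = pi univ c}

namespace SphericallyComplete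

variable {α β : Type*} {𝓑 : Set (Set α)} {𝓒 : Set (Set β)}

theorem nonempty_of_mem (h : SphericallyComplete 𝓑) {b : Set α} (hb : b ∈ 𝓑) : b.Nonempty := by
  simpa using h {b} (singleton_subset_iff.2 hb) (singleton_nonempty b)
    (subsingleton_singleton.isChain)

theorem of_monotone_of_mapsTo (h : SphericallyComplete 𝓒) {f : Set α → Set β} (hf : Monotone f)
    (hmaps : MapsTo f 𝓑 𝓒) {p : β → α} (hp : ∀ b y, y ∈ f b → p y ∈ b) :
    SphericallyComplete 𝓑 := by
  intro N hN hNne hchain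
  obtain ⟨y, hy⟩ := h (f '' N) (image_subset_iff.2 fun _ hb => hmaps (hN hb)) (hNne.image f)
    (hchain.image_of_map_rel (· ⊆ ·) (· ⊆ ·) f fun _ _ => (hf ·))
  exact ⟨p y, fun b hb => hp b y (hy _ (mem_image_of_mem f hb))⟩

end SphericallyComplete

section BoxProduct

variable {J : Type*} {X : J → Type*} {B : ∀ j, Set (Set (X j))} {b : Set (∀ j, X j)}

theorem pi_eval_image_subset_of_mem_boxBalls (hb : b ∈ boxBalls B) :
    (pi univ fun j => eval j '' b) ⊆ b := by
  obtain ⟨c, -, rfl⟩ := hb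
  exact pi_mono fun _ _ => eval_image_univ_pi_subset

theorem eval_image_mem_of_mem_boxBalls (hballs : ∀ j, ∀ c ∈ B j, c.Nonempty)
    (hb : b ∈ boxBalls B) (j : J) : eval j '' b ∈ B j := by
  obtain ⟨c, hc, rfl⟩ := hb
  rw [eval_image_univ_pi (univ_pi_nonempty_iff.2 fun i => hballs i _ (hc i))]
  exact hc j

theorem sphericallyComplete_boxBalls (h : ∀ j, SphericallyComplete (B j)) :
    SphericallyComplete (boxBalls B) := by
  have hballs : ∀ j, ∀ c ∈ B j, c.Nonempty := fun j _ hc => (h j).nonempty_of_mem hc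
  intro N hN hNne hchain
  have hproj : ∀ j, (⋂₀ (image (eval j) '' N)).Nonempty := fun j =>
    h j _ (image_subset_iff.2 fun _ hb => eval_image_mem_of_mem_boxBalls hballs (hN hb) j)
      (hNne.image _) (hchain.image_of_map_rel _ _ (image (eval j)) fun _ _ => image_mono)
  choose x hx using hproj
  refine ⟨x, fun b hb => ?_⟩
  exact pi_eval_image_subset_of_mem_boxBalls (hN hb) fun j _ => hx j _ (mem_image_of_mem _ hb)

theorem SphericallyComplete.of_boxBalls (hB : ∀ j, (B j).Nonempty)
    (h : SphericallyComplete (boxBalls B)) (j : J) : SphericallyComplete (B j) := by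
  classical
  choose c₀ hc₀ using hB
  refine h.of_monotone_of_mapsTo (f := fun b => pi univ (update c₀ j b)) (p := eval j)
    (fun _ _ hbb => pi_mono fun i _ => update_mono (f := c₀) (i := j) hbb i)
    (fun b hb => ⟨_, fun i => ?_, rfl⟩) (fun b y hy => by simpa using hy j (mem_univ j))
  rcases eq_or_ne i j with rfl | hij
  · simpa using hb
  · simpa [update_of_ne hij] using hc₀ i

end BoxProduct

theorem boxProduct_sphericallyComplete_general {J : Type*} (X : J → Type*)
    (B : ∀ j, Set (Set (X j)))
    (hBne : ∀ j, (B j).Nonempty) :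
    (∀ N ⊆ {b : Set (∀ j, X j) |
          ∃ c : ∀ j, Set (X j), (∀ j, c j ∈ B j) ∧ b = Set.pi Set.univ c},
        N.Nonempty → IsChain (· ⊆ ·) N → (⋂₀ N).Nonempty) ↔
    (∀ j, ∀ N ⊆ B j, N.Nonempty → IsChain (· ⊆ ·) N → (⋂₀ N).Nonempty) :=
  ⟨fun h => SphericallyComplete.of_boxBalls (X := X) hBne h, sphericallyComplete_boxBalls (X := X)⟩

/-- The box product of a family of ball spaces is spherically complete if and only if
each factor is spherically complete. -/
theorem boxProduct_sphericallyComplete {J : Type*} (X : J → Type*)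
    [∀ j, Nonempty (X j)] (B : ∀ j, Set (Set (X j)))
    (hBne : ∀ j, (B j).Nonempty) (hballs : ∀ j, ∀ b ∈ B j, b.Nonempty) :
    (∀ N ⊆ {b : Set (∀ j, X j) |
          ∃ c : ∀ j, Set (X j), (∀ j, c j ∈ B j) ∧ b = Set.pi Set.univ c},
        N.Nonempty → IsChain (· ⊆ ·) N → (⋂₀ N).Nonempty) ↔
    (∀ j, ∀ N ⊆ B j, N.Nonempty → IsChain (· ⊆ ·) N → (⋂₀ N).Nonempty) :=
  boxProduct_sphericallyComplete_general X B hBne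
end
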